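/- For every x ∈ [0.37613, 0.58870], the unique solution θ(x) of w₂(x,θ) = 0 satisfies −x < θ(x) < 0; equivalently, x + θ(x) ∈ (0, x). -/

import Mathlib

/-!
Put `u = 2x + θ`. Since the fraction in `w₂` is positive, `w₂ x θ = 0` forces `θ < 0` and says
`exp (-u²) = (2x - u) · √π (1 + erf u)`; if `θ ≤ -x` then `u ≤ x`. We show the strict inequality
`exp (-u²) < (2x - u) · √π (1 + erf u)` for all `u ≤ x`. The right side grows with `x`, so it
suffices to take `x = 0.37613` (for `u ≥ 0.37613` compare with `u = 0.37613`, using that `erf` is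
monotone). For `u ≤ -1/2` we use the tail bound
`∫_v^∞ exp (-t²) ≥ exp (-v²) (1 - exp (-(2v+1))) / (2v+1)`, which comes from the chord
`t² ≤ v² + (2v+1)(t - v)` on `[v, v+1]`. On `[-1/2, 0.37613]`, the bounds
`exp (-u²) ≤ 1 / (1 + u²)` and `∫_0^u exp (-t²) ≥ u - u³/3` (`≥ u` for `u ≤ 0`) reduce the
claim to a polynomial inequality.
-/

/-- The Gaussian error function `erf x = (2/√π) ∫₀ˣ exp(−t²) dt`. -/
noncomputable def erf (x : ℝ) : ℝ :=
  (2 / Real.sqrt Real.pi) * ∫ t in (0:ℝ)..x, Real.exp (-t ^ 2)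

/-- `w₂(x,θ) = θ + (1/√π)·exp(−(2x+θ)²)/(1 + erf(2x+θ))`. -/
noncomputable def w₂ (x θ : ℝ) : ℝ :=
  θ + (1 / Real.sqrt Real.pi) * (Real.exp (-(2 * x + θ) ^ 2) / (1 + erf (2 * x + θ)))

open Real MeasureTheory Set intervalIntegral

lemma integrable_exp_neg_sq : Integrable fun t : ℝ => exp (-t ^ 2) := by
  simpa using integrable_exp_neg_mul_sq one_pos

lemma integral_Ioi_zero_exp_neg_sq : ∫ t in Ioi (0 : ℝ), exp (-t ^ 2) = √π / 2 := by
  simpa using integral_gaussian_Ioi 1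

lemma integral_neg_zero_exp_neg_sq (z : ℝ) :
    ∫ t in -z..0, exp (-t ^ 2) = ∫ t in 0..z, exp (-t ^ 2) := by
  have h := integral_comp_neg (a := 0) (b := z) fun t => exp (-t ^ 2)
  simp only [neg_sq, neg_zero] at h
  exact h.symm

lemma sqrt_pi_mul_erf (z : ℝ) : √π * erf z = 2 * ∫ t in 0..z, exp (-t ^ 2) := by
  rw [erf]
  field_simp

lemma sqrt_pi_mul_one_add_erf (z : ℝ) :
    √π * (1 + erf z) = 2 * ∫ t in Ioi (-z), exp (-t ^ 2) := by
  rw [← integral_interval_add_Ioi (b := 0) integrable_exp_neg_sq.integrableOn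
    integrable_exp_neg_sq.integrableOn, integral_neg_zero_exp_neg_sq,
    integral_Ioi_zero_exp_neg_sq, mul_add, sqrt_pi_mul_erf]
  ring

lemma one_add_erf_pos (z : ℝ) : 0 < 1 + erf z := by
  have : NeZero (volume (Ioi (-z))) := ⟨by simp⟩
  have hI : 0 < ∫ t in Ioi (-z), exp (-t ^ 2) :=
    integral_exp_pos integrable_exp_neg_sq.integrableOn
  refine pos_of_mul_pos_right ?_ (sqrt_nonneg π)
  rw [sqrt_pi_mul_one_add_erf]
  positivity

lemma sqrt_pi_mul_one_add_erf_pos (z : ℝ) : 0 < √π * (1 + erf z) :=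
  mul_pos (sqrt_pos.2 pi_pos) (one_add_erf_pos z)

lemma erf_monotone : Monotone erf := by
  intro a b hab
  have h : √π * (1 + erf a) ≤ √π * (1 + erf b) := by
    rw [sqrt_pi_mul_one_add_erf, sqrt_pi_mul_one_add_erf]
    gcongr 2 * ?_
    exact setIntegral_mono_set integrable_exp_neg_sq.integrableOn
      (.of_forall fun t => (exp_pos _).le) (Ioi_subset_Ioi (neg_le_neg hab)).eventuallyLE
  have := (mul_le_mul_iff_of_pos_left (sqrt_pos.2 pi_pos)).1 h
  linarith

lemma integral_exp_neg_sq_le_sub {a b : ℝ} (hab : a ≤ b) :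
    ∫ t in a..b, exp (-t ^ 2) ≤ b - a := by
  calc ∫ t in a..b, exp (-t ^ 2) ≤ ∫ _ in a..b, (1 : ℝ) :=
        integral_mono_on hab (Continuous.intervalIntegrable (by fun_prop) _ _)
          intervalIntegrable_const fun t _ => exp_le_one_iff.2 (by nlinarith)
    _ = b - a := by simp

lemma sub_pow_three_div_le_integral_exp_neg_sq {u : ℝ} (hu : 0 ≤ u) :
    u - u ^ 3 / 3 ≤ ∫ t in 0..u, exp (-t ^ 2) := by
  calc u - u ^ 3 / 3 = ∫ t in 0..u, (1 - t ^ 2) := by simp [integral_pow]; ring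
    _ ≤ ∫ t in 0..u, exp (-t ^ 2) :=
        integral_mono_on hu (Continuous.intervalIntegrable (by fun_prop) _ _)
          (Continuous.intervalIntegrable (by fun_prop) _ _)
          fun t _ => by linarith [add_one_le_exp (-t ^ 2)]

lemma two_mul_le_sqrt_pi_mul_erf {u : ℝ} (hu : u ≤ 0) : 2 * u ≤ √π * erf u := by
  rw [sqrt_pi_mul_erf, integral_symm]
  linarith [integral_exp_neg_sq_le_sub hu]

lemma two_mul_sub_le_sqrt_pi_mul_erf {u : ℝ} (hu : 0 ≤ u) :
    2 * (u - u ^ 3 / 3) ≤ √π * erf u := by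
  rw [sqrt_pi_mul_erf]
  linarith [sub_pow_three_div_le_integral_exp_neg_sq hu]

lemma exp_neg_sq_mul_le_integral_Ioi {v : ℝ} (hv : 0 < 2 * v + 1) :
    exp (-v ^ 2) * (1 - exp (-(2 * v + 1))) ≤ (2 * v + 1) * ∫ t in Ioi v, exp (-t ^ 2) := by
  set c := 2 * v + 1
  have hchord : ∀ t ∈ Icc v (v + 1), exp (-c * t + (c * v - v ^ 2)) ≤ exp (-t ^ 2) :=
    fun t ht => exp_le_exp.2 (by nlinarith [mul_nonneg (sub_nonneg.2 ht.1) (sub_nonneg.2 ht.2)])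
  have hchord_int : c * ∫ t in v..v + 1, exp (-c * t + (c * v - v ^ 2))
      = exp (-v ^ 2) * (1 - exp (-c)) := by
    rw [integral_comp_mul_add (fun t => exp t) (neg_ne_zero.2 hv.ne'), integral_exp, smul_eq_mul,
      show -c * (v + 1) + (c * v - v ^ 2) = -v ^ 2 + -c by ring,
      show -c * v + (c * v - v ^ 2) = -v ^ 2 by ring, exp_add]
    field_simp
    ring
  have hsplit : ∫ t in v..v + 1, exp (-t ^ 2) ≤ ∫ t in Ioi v, exp (-t ^ 2) := by
    rw [← integral_interval_add_Ioi integrable_exp_neg_sq.integrableOn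
      integrable_exp_neg_sq.integrableOn]
    linarith [setIntegral_nonneg (μ := volume) (s := Ioi (v + 1)) measurableSet_Ioi
      fun t _ => (exp_pos (-t ^ 2)).le]
  calc exp (-v ^ 2) * (1 - exp (-c))
      = c * ∫ t in v..v + 1, exp (-c * t + (c * v - v ^ 2)) := hchord_int.symm
    _ ≤ c * ∫ t in v..v + 1, exp (-t ^ 2) := by
        gcongr
        exact integral_mono_on (by linarith) (Continuous.intervalIntegrable (by fun_prop) _ _)
          (Continuous.intervalIntegrable (by fun_prop) _ _) hchord
    _ ≤ c * ∫ t in Ioi v, exp (-t ^ 2) := by gcongr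

lemma exp_neg_mul_one_add_le (y : ℝ) : exp (-y) * (1 + y) ≤ 1 := by
  have h := mul_le_mul_of_nonneg_left (by linarith [add_one_le_exp y] : 1 + y ≤ exp y)
    (exp_pos (-y)).le
  rwa [← exp_add, neg_add_cancel, exp_zero] at h

lemma sqrt_pi_gt_d2 : (1.77 : ℝ) < √π :=
  lt_sqrt_of_sq_lt (by nlinarith [pi_gt_d2])

lemma exp_neg_sq_lt_of_le_neg_half {u : ℝ} (hu : u ≤ -1 / 2) :
    exp (-u ^ 2) < (2 * 0.37613 - u) * (√π * (1 + erf u)) := by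
  set c := 1 - 2 * u
  have htail := exp_neg_sq_mul_le_integral_Ioi (v := -u) (by linarith)
  rw [neg_sq, show 2 * -u + 1 = c by ring] at htail
  rw [sqrt_pi_mul_one_add_erf]
  set I := ∫ t in Ioi (-u), exp (-t ^ 2)
  have hI : 0 ≤ I := setIntegral_nonneg measurableSet_Ioi fun t _ => (exp_pos _).le
  -- `c + 0.50452 = 2 * (2 * 0.37613 - u)`
  have hq : (c + 0.50452) * exp (-c) < 0.50452 := by
    have h := mul_le_mul_of_nonneg_left (quadratic_le_exp_of_nonneg (by linarith : 0 ≤ c))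
      (exp_pos (-c)).le
    rw [← exp_add, neg_add_cancel, exp_zero] at h
    nlinarith [exp_pos (-c)]
  have hE := exp_pos (-u ^ 2)
  nlinarith [mul_lt_mul_of_pos_left hq hE]

lemma exp_neg_sq_lt_of_neg_half_le_of_nonpos {u : ℝ} (hu₁ : -1 / 2 ≤ u) (hu₂ : u ≤ 0) :
    exp (-u ^ 2) < (2 * 0.37613 - u) * (√π * (1 + erf u)) := by
  have hS : 1.77 + 2 * u ≤ √π * (1 + erf u) := by
    linarith [sqrt_pi_gt_d2, two_mul_le_sqrt_pi_mul_erf hu₂]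
  have hE := exp_neg_mul_one_add_le (u ^ 2)
  have hpoly : 1 < (1 + u ^ 2) * ((2 * 0.37613 - u) * (1.77 + 2 * u)) := by
    nlinarith [sq_nonneg u, mul_nonneg (sub_nonneg.2 hu₁) (sub_nonneg.2 hu₂)]
  nlinarith [mul_le_mul_of_nonneg_left hS (by linarith : (0 : ℝ) ≤ 2 * 0.37613 - u),
    exp_pos (-u ^ 2)]

lemma exp_neg_sq_lt_of_nonneg_of_le {u : ℝ} (hu₁ : 0 ≤ u) (hu₂ : u ≤ 0.37613) :
    exp (-u ^ 2) < (2 * 0.37613 - u) * (√π * (1 + erf u)) := by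
  have hS : 1.77 + 1.9 * u ≤ √π * (1 + erf u) := by
    nlinarith [sqrt_pi_gt_d2, two_mul_sub_le_sqrt_pi_mul_erf hu₁,
      mul_nonneg hu₁ (mul_nonneg hu₁ hu₁), mul_nonneg hu₁ (sub_nonneg.2 hu₂)]
  have hE := exp_neg_mul_one_add_le (u ^ 2)
  have hpoly : 1 < (1 + u ^ 2) * ((2 * 0.37613 - u) * (1.77 + 1.9 * u)) := by
    nlinarith [sq_nonneg u, mul_nonneg hu₁ (sub_nonneg.2 hu₂),
      mul_nonneg (mul_nonneg hu₁ hu₁) (sub_nonneg.2 hu₂)]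
  nlinarith [mul_le_mul_of_nonneg_left hS (by linarith : (0 : ℝ) ≤ 2 * 0.37613 - u),
    exp_pos (-u ^ 2)]

lemma exp_neg_sq_lt_of_le {u : ℝ} (hu : u ≤ 0.37613) :
    exp (-u ^ 2) < (2 * 0.37613 - u) * (√π * (1 + erf u)) := by
  rcases le_or_gt u (-1 / 2) with h₁ | h₁
  · exact exp_neg_sq_lt_of_le_neg_half h₁
  rcases le_or_gt u 0 with h₂ | h₂
  · exact exp_neg_sq_lt_of_neg_half_le_of_nonpos h₁.le h₂
  · exact exp_neg_sq_lt_of_nonneg_of_le h₂.le hu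

lemma exp_neg_sq_lt {x u : ℝ} (hx : 0.37613 ≤ x) (hu : u ≤ x) :
    exp (-u ^ 2) < (2 * x - u) * (√π * (1 + erf u)) := by
  rcases le_total u 0.37613 with h | h
  · calc exp (-u ^ 2) < (2 * 0.37613 - u) * (√π * (1 + erf u)) := exp_neg_sq_lt_of_le h
      _ ≤ (2 * x - u) * (√π * (1 + erf u)) :=
        mul_le_mul_of_nonneg_right (by linarith) (sqrt_pi_mul_one_add_erf_pos u).le
  · calc exp (-u ^ 2) ≤ exp (-0.37613 ^ 2) := exp_le_exp.2 (by nlinarith)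
      _ < (2 * 0.37613 - 0.37613) * (√π * (1 + erf 0.37613)) := exp_neg_sq_lt_of_le le_rfl
      _ ≤ (2 * x - u) * (√π * (1 + erf u)) :=
        mul_le_mul (by linarith) (by gcongr; exact erf_monotone h)
          (sqrt_pi_mul_one_add_erf_pos _).le (by linarith)

lemma lt_w₂ (x θ : ℝ) : θ < w₂ x θ := by
  have := one_add_erf_pos (2 * x + θ)
  rw [w₂]
  linarith [show 0 < 1 / √π * (exp (-(2 * x + θ) ^ 2) / (1 + erf (2 * x + θ))) by positivity]

lemma w₂_neg_iff (x θ : ℝ) :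
    w₂ x θ < 0 ↔ exp (-(2 * x + θ) ^ 2) < -θ * (√π * (1 + erf (2 * x + θ))) := by
  rw [w₂, ← lt_neg_iff_add_neg', one_div_mul_eq_div, div_div, mul_comm (1 + _),
    div_lt_iff₀ (sqrt_pi_mul_one_add_erf_pos _)]

/-- Any solution `θ` of `w₂(x,θ) = 0` (in particular the unique one `θ(x)`)
satisfies `−x < θ < 0`, i.e. `x + θ ∈ (0, x)`. -/
theorem stmt4 (x : ℝ) (hx : x ∈ Set.Icc (0.37613 : ℝ) 0.58870) (θ : ℝ) (hθ : w₂ x θ = 0) :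
    θ ∈ Set.Ioo (-x) 0 := by
  refine ⟨?_, hθ ▸ lt_w₂ x θ⟩
  by_contra! hθx
  have key := exp_neg_sq_lt hx.1 (show 2 * x + θ ≤ x by linarith)
  rw [show 2 * x - (2 * x + θ) = -θ by ring] at key
  exact hθ.not_lt ((w₂_neg_iff x θ).2 key)
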